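/- arXiv:1204.1843 — 2 statements merged into one kernel-verified Lean document; each statement's English description precedes it below -/
import Mathlib

section
/- For every Schwartz function u on ℂⁿ and every j ∈ {1,…,n}, the partial derivatives of |u| satisfy |∂_{x_j}|u|(z)| ≤ |L_j u(z)| and |∂_{y_j}|u|(z)| ≤ |M_j u(z)| for almost every z ∈ ℂⁿ; consequently ‖ |u| ‖_{H¹(ℝ^{2n})} ≤ (2n+1) ‖u‖_{W̃^{1,2}}. -/
open MeasureTheory Real ENNReal

noncomputable section

/-- `L_j f = ∂_{x_j} f + (i y_j/2) f`, acting on functions on ℂⁿ ≃ ℝ^{2n}. -/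
def Lop (n : ℕ) (j : Fin n) (f : (Fin n → ℂ) → ℂ) (z : Fin n → ℂ) : ℂ :=
  fderiv ℝ f z (Pi.single j 1) + Complex.I * ((z j).im : ℂ) / 2 * f z

/-- `M_j f = ∂_{y_j} f − (i x_j/2) f`, acting on functions on ℂⁿ ≃ ℝ^{2n}. -/
def Mop (n : ℕ) (j : Fin n) (f : (Fin n → ℂ) → ℂ) (z : Fin n → ℂ) : ℂ :=
  fderiv ℝ f z (Pi.single j Complex.I) - Complex.I * ((z j).re : ℂ) / 2 * f z

/-- The Sobolev norm `‖f‖_{W̃^{1,p}} = max{‖f‖_{L^p}, ‖L_j f‖_{L^p}, ‖M_j f‖_{L^p} : j}`. -/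
def sobNorm (n : ℕ) (p : ℝ≥0∞) (f : (Fin n → ℂ) → ℂ) : ℝ≥0∞ :=
  max (eLpNorm f p volume)
    (⨆ j : Fin n, max (eLpNorm (Lop n j f) p volume) (eLpNorm (Mop n j f) p volume))

/-- The `H¹(ℝ^{2n})` norm of a real valued function on ℂⁿ ≃ ℝ^{2n}, as the sum of the `L²`
norms of the function and of its `2n` partial derivatives. -/
def H1Norm (n : ℕ) (g : (Fin n → ℂ) → ℝ) : ℝ≥0∞ :=
  eLpNorm g 2 volume +
    ∑ j : Fin n,
      (eLpNorm (fun z => fderiv ℝ g z (Pi.single j 1)) 2 volume +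
        eLpNorm (fun z => fderiv ℝ g z (Pi.single j Complex.I)) 2 volume)

/-!
Where `u z ≠ 0`, the derivative of `|u|` in a direction `e` is `⟪u z, ∂ₑu z⟫_ℝ / |u z|`, viewing
`ℂ` as the real inner product space `ℝ²`. A magnetic term `c · u z` with `c` purely imaginary is
orthogonal to `u z`, so it can be added to `∂ₑu z` without changing this inner product, and
Cauchy–Schwarz gives `|∂ₑ|u|| ≤ |∂ₑu + c u|`. Where `u z = 0`, `|u|` has a minimum and its derivative
vanishes. Each of the `2n + 1` terms of the `H¹` norm of `|u|` is then bounded by `‖u‖_{W̃^{1,2}}`.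
-/

open scoped InnerProductSpace

section NormDerivative

variable {E F : Type*} [NormedAddCommGroup E] [NormedSpace ℝ E]
  [NormedAddCommGroup F] [InnerProductSpace ℝ F]

theorem HasFDerivAt.norm {f : E → F} {f' : E →L[ℝ] F} {x : E} (hf : HasFDerivAt f f' x)
    (h0 : f x ≠ 0) :
    HasFDerivAt (‖f ·‖) (‖f x‖⁻¹ • (innerSL ℝ (f x)).comp f') x := by
  have hsq : ‖f x‖ ^ 2 ≠ 0 := by positivity
  convert hf.norm_sq.sqrt hsq using 1
  · simp only [sqrt_sq (norm_nonneg _)]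
  · ext e
    simp only [smul_apply, ContinuousLinearMap.comp_apply, coe_innerSL_apply, smul_eq_mul,
      sqrt_sq (norm_nonneg _), one_div, mul_inv_rev, nsmul_eq_mul, Nat.cast_ofNat]
    field_simp

theorem abs_fderiv_norm_apply_le {f : E → F} {x : E} (hf : DifferentiableAt ℝ f x) (e : E)
    {v : F} (hv : ⟪f x, v⟫_ℝ = 0) :
    |fderiv ℝ (‖f ·‖) x e| ≤ ‖fderiv ℝ f x e + v‖ := by
  by_cases h0 : f x = 0
  · have hmin : IsLocalMin (‖f ·‖) x :=
      Filter.Eventually.of_forall fun w => by simp [h0]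
    simp [hmin.fderiv_eq_zero]
  · rw [(hf.hasFDerivAt.norm h0).fderiv]
    calc |(‖f x‖⁻¹ • (innerSL ℝ (f x)).comp (fderiv ℝ f x)) e|
        = ‖f x‖⁻¹ * |⟪f x, fderiv ℝ f x e + v⟫_ℝ| := by
          simp [inner_add_right, hv, abs_mul]
      _ ≤ ‖f x‖⁻¹ * (‖f x‖ * ‖fderiv ℝ f x e + v‖) := by
          gcongr; exact abs_real_inner_le_norm _ _
      _ = ‖fderiv ℝ f x e + v‖ := by field_simp

end NormDerivative

theorem Complex.inner_mul_self_eq_zero {c : ℂ} (hc : c.re = 0) (a : ℂ) : ⟪a, c * a⟫_ℝ = 0 := by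
  rw [Complex.inner, mul_assoc, Complex.mul_conj, Complex.re_mul_ofReal, hc, zero_mul]

section MagneticDerivatives

variable {n : ℕ} {f : (Fin n → ℂ) → ℂ}

theorem abs_fderiv_norm_apply_single_one_le_norm_Lop {z : Fin n → ℂ}
    (hf : DifferentiableAt ℝ f z) (j : Fin n) :
    |fderiv ℝ (‖f ·‖) z (Pi.single j 1)| ≤ ‖Lop n j f z‖ :=
  abs_fderiv_norm_apply_le hf _ (Complex.inner_mul_self_eq_zero (by simp) _)

theorem abs_fderiv_norm_apply_single_I_le_norm_Mop {z : Fin n → ℂ}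
    (hf : DifferentiableAt ℝ f z) (j : Fin n) :
    |fderiv ℝ (‖f ·‖) z (Pi.single j Complex.I)| ≤ ‖Mop n j f z‖ := by
  rw [Mop, sub_eq_add_neg, ← neg_mul]
  exact abs_fderiv_norm_apply_le hf _ (Complex.inner_mul_self_eq_zero (by simp) _)

variable (p : ℝ≥0∞)

theorem eLpNorm_le_sobNorm : eLpNorm f p volume ≤ sobNorm n p f :=
  le_max_left _ _

theorem max_eLpNorm_Lop_Mop_le_sobNorm (j : Fin n) :
    max (eLpNorm (Lop n j f) p volume) (eLpNorm (Mop n j f) p volume) ≤ sobNorm n p f :=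
  le_max_of_le_right <| le_iSup (fun i => max (eLpNorm (Lop n i f) p volume)
    (eLpNorm (Mop n i f) p volume)) j

theorem eLpNorm_Lop_le_sobNorm (j : Fin n) : eLpNorm (Lop n j f) p volume ≤ sobNorm n p f :=
  (le_max_left _ _).trans (max_eLpNorm_Lop_Mop_le_sobNorm p j)

theorem eLpNorm_Mop_le_sobNorm (j : Fin n) : eLpNorm (Mop n j f) p volume ≤ sobNorm n p f :=
  (le_max_right _ _).trans (max_eLpNorm_Lop_Mop_le_sobNorm p j)

theorem H1Norm_norm_le_sobNorm (hf : Differentiable ℝ f) :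
    H1Norm n (‖f ·‖) ≤ ((2 * n + 1 : ℕ) : ℝ≥0∞) * sobNorm n 2 f := by
  set S := sobNorm n 2 f
  have hx (j : Fin n) : eLpNorm (fun z => fderiv ℝ (‖f ·‖) z (Pi.single j 1)) 2 volume ≤ S :=
    (eLpNorm_mono fun z => abs_fderiv_norm_apply_single_one_le_norm_Lop (hf z) j).trans
      (eLpNorm_Lop_le_sobNorm 2 j)
  have hy (j : Fin n) :
      eLpNorm (fun z => fderiv ℝ (‖f ·‖) z (Pi.single j Complex.I)) 2 volume ≤ S :=
    (eLpNorm_mono fun z => abs_fderiv_norm_apply_single_I_le_norm_Mop (hf z) j).trans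
      (eLpNorm_Mop_le_sobNorm 2 j)
  calc H1Norm n (‖f ·‖)
      ≤ S + ∑ _j : Fin n, (S + S) :=
        add_le_add ((eLpNorm_norm f).trans_le (eLpNorm_le_sobNorm 2))
          (Finset.sum_le_sum fun j _ => add_le_add (hx j) (hy j))
    _ = ((2 * n + 1 : ℕ) : ℝ≥0∞) * S := by
        simp only [Finset.sum_const, Finset.card_univ, Fintype.card_fin, nsmul_eq_mul]
        push_cast
        ring

end MagneticDerivatives

/-- For Schwartz `u` on ℂⁿ, a.e. `|∂_{x_j}|u|| ≤ |L_j u|` and `|∂_{y_j}|u|| ≤ |M_j u|`;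
consequently `‖|u|‖_{H¹(ℝ^{2n})} ≤ (2n+1) ‖u‖_{W̃^{1,2}}`. -/
theorem stmt7 (n : ℕ) (u : SchwartzMap (Fin n → ℂ) ℂ) :
    (∀ j : Fin n, ∀ᵐ z : Fin n → ℂ,
      |fderiv ℝ (fun w => ‖u w‖) z (Pi.single j 1)| ≤
          ‖Lop n j (⇑u) z‖ ∧
      |fderiv ℝ (fun w => ‖u w‖) z (Pi.single j Complex.I)| ≤
          ‖Mop n j (⇑u) z‖) ∧
    H1Norm n (fun z => ‖u z‖) ≤ ((2 * n + 1 : ℕ) : ℝ≥0∞) * sobNorm n 2 (⇑u) :=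
  ⟨fun j => Filter.Eventually.of_forall fun _ =>
      ⟨abs_fderiv_norm_apply_single_one_le_norm_Lop u.differentiableAt j,
        abs_fderiv_norm_apply_single_I_le_norm_Mop u.differentiableAt j⟩,
    H1Norm_norm_le_sobNorm u.differentiable⟩
end
end

section
/- Fix j ∈ {1,…,n} and w = u + iv ∈ ℂⁿ. For every differentiable f : ℂⁿ → ℂ and z = x + iy ∈ ℂⁿ, the identity (∂_{x_j} + i y_j/2)[ f(z−w) e^{(i/2) Im(z·w̄)} ] = e^{(i/2) Im(z·w̄)} (L_j f)(z−w) holds, and likewise (∂_{y_j} − i x_j/2)[ f(z−w) e^{(i/2) Im(z·w̄)} ] = e^{(i/2) Im(z·w̄)} (M_j f)(z−w), where the outer derivatives are taken in the z variable. Consequently, for every Schwartz function f on ℂⁿ and every bounded measurable g : ℂⁿ → ℂ, L_j(f × g) = (L_j f) × g and M_j(f × g) = (M_j f) × g. -/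
open MeasureTheory Real ENNReal

noncomputable section

/-- The twist phase `e^{(i/2) Im(z·w̄)}`. -/
def twistPhase (n : ℕ) (z w : Fin n → ℂ) : ℂ :=
  Complex.exp (Complex.I / 2 * ((∑ j, z j * (starRingEnd ℂ) (w j)).im : ℂ))

/-- Twisted convolution `(f × g)(z) = ∫ f(z−w) g(w) e^{(i/2) Im(z·w̄)} dw` on ℂⁿ. -/
def twistedConv (n : ℕ) (f g : (Fin n → ℂ) → ℂ) (z : Fin n → ℂ) : ℂ :=
  ∫ w : Fin n → ℂ, f (z - w) * g w * twistPhase n z w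

/-!
With `ω(z, w) = Im(z · w̄)`, which is real-bilinear, the product rule gives
`∂_v [f(z - w) e^{(i/2) ω(z, w)}] = e^{(i/2) ω(z, w)} (∂_v f(z - w) + (i/2) ω(v, w) f(z - w))`.
Since `ω(e_j, w) = -v_j` and `ω(i e_j, w) = u_j`, the extra term is exactly what turns the
multiplier `i y_j / 2` (resp. `-i x_j / 2`) at `z` into the one at `z - w`. For `f × g`,
differentiate under the integral sign: the derivative of the integrand is bounded by
`|g(w)| (1 + |w|) (|f| + |∇f|)(z - w)`, which Schwartz decay of `f` makes integrable in `w`,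
uniformly for `z` near a given point.
-/

open ComplexConjugate ContinuousLinearMap
open scoped SchwartzMap

theorem SchwartzMap.exists_one_add_norm_pow_mul_le {E F : Type*} [NormedAddCommGroup E]
    [NormedSpace ℝ E] [NormedAddCommGroup F] [NormedSpace ℝ F] (f : 𝓢(E, F)) (k : ℕ) :
    ∃ C, ∀ x, (1 + ‖x‖) ^ k * (‖f x‖ + ‖fderiv ℝ f x‖) ≤ C := by
  refine ⟨2 * (2 ^ k * (Finset.Iic (k, 1)).sup (fun m => SchwartzMap.seminorm ℝ m.1 m.2) f),
    fun x => ?_⟩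
  have h₀ := f.one_add_le_sup_seminorm_apply (𝕜 := ℝ) (m := (k, 1)) le_rfl zero_le_one x
  have h₁ := f.one_add_le_sup_seminorm_apply (𝕜 := ℝ) (m := (k, 1)) le_rfl le_rfl x
  rw [norm_iteratedFDeriv_zero] at h₀
  rw [norm_iteratedFDeriv_one] at h₁
  linarith [mul_add ((1 + ‖x‖) ^ k) ‖f x‖ ‖fderiv ℝ f x‖]

theorem inv_one_add_norm_sub_pow_le {E : Type*} [SeminormedAddCommGroup E] {z₀ z : E}
    (hz : ‖z - z₀‖ < 1) (w : E) (k : ℕ) :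
    ((1 + ‖z - w‖) ^ k)⁻¹ ≤ 2 ^ k * ((1 + ‖w - z₀‖) ^ k)⁻¹ := by
  have hle : (1 + ‖w - z₀‖) / 2 ≤ 1 + ‖z - w‖ := by
    have := norm_sub_le_norm_sub_add_norm_sub w z z₀
    rw [norm_sub_rev w z] at this
    linarith [norm_nonneg (z - w)]
  calc ((1 + ‖z - w‖) ^ k)⁻¹ ≤ (((1 + ‖w - z₀‖) / 2) ^ k)⁻¹ :=
        inv_anti₀ (by positivity) (pow_le_pow_left₀ (by positivity) hle k)
    _ = 2 ^ k * ((1 + ‖w - z₀‖) ^ k)⁻¹ := by rw [div_pow, inv_div, div_eq_mul_inv]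

theorem integrable_inv_one_add_norm_sub_pow {E : Type*} [NormedAddCommGroup E]
    [NormedSpace ℝ E] [FiniteDimensional ℝ E] [MeasurableSpace E] [BorelSpace E]
    (μ : Measure E) [μ.IsAddHaarMeasure] {k : ℕ} (hk : Module.finrank ℝ E < k) (z₀ : E) :
    Integrable (fun w => ((1 + ‖w - z₀‖) ^ k)⁻¹) μ := by
  refine ((integrable_one_add_norm (μ := μ) (r := k) (mod_cast hk)).comp_sub_right z₀).congr
    (.of_forall fun w => ?_)
  simp [Real.rpow_neg (by positivity : (0 : ℝ) ≤ 1 + ‖w - z₀‖)]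

section TwistedTranslate

variable {n : ℕ}

-- `imDot n z w = Im(z · w̄)`, built as a continuous bilinear map so that continuity in `w` and
-- the bound `‖(imDot n).flip w‖ ≤ ‖imDot n‖ * ‖w‖` come for free.
def imDot (n : ℕ) : (Fin n → ℂ) →L[ℝ] (Fin n → ℂ) →L[ℝ] ℝ :=
  ∑ k, ((mul ℝ ℝ).bilinearComp (Complex.imCLM ∘L proj k) (Complex.reCLM ∘L proj k) -
    (mul ℝ ℝ).bilinearComp (Complex.reCLM ∘L proj k) (Complex.imCLM ∘L proj k))

theorem imDot_apply (z w : Fin n → ℂ) : imDot n z w = (∑ k, z k * conj (w k)).im := by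
  simp [imDot, Complex.im_sum, Complex.mul_im, neg_add_eq_sub]

theorem imDot_single_left (j : Fin n) (a : ℂ) (w : Fin n → ℂ) :
    imDot n (Pi.single j a) w = (a * conj (w j)).im := by
  rw [imDot_apply, Finset.sum_eq_single j (fun k _ hk => by simp [hk]) (by simp)]
  simp

theorem twistPhase_eq_exp_imDot (z w : Fin n → ℂ) :
    twistPhase n z w = Complex.exp (Complex.I / 2 * imDot n z w) := by
  rw [imDot_apply, twistPhase]

theorem norm_twistPhase (z w : Fin n → ℂ) : ‖twistPhase n z w‖ = 1 := by
  rw [twistPhase_eq_exp_imDot, Complex.norm_exp]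
  simp

theorem continuous_twistPhase_right (z : Fin n → ℂ) : Continuous (twistPhase n z) := by
  simp_rw [funext (twistPhase_eq_exp_imDot z)]
  fun_prop

theorem hasFDerivAt_twistPhase_left (z w : Fin n → ℂ) :
    HasFDerivAt (twistPhase n · w)
      (((imDot n).flip w).smulRight (twistPhase n z w * (Complex.I / 2))) z := by
  have h : HasFDerivAt (fun ζ => Complex.I / 2 * (imDot n ζ w : ℂ))
      ((Complex.I / 2) • (Complex.ofRealCLM ∘L (imDot n).flip w)) z :=
    ((Complex.ofRealCLM ∘L (imDot n).flip w).hasFDerivAt).const_mul _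
  simp_rw [twistPhase_eq_exp_imDot]
  refine h.cexp.congr_fderiv ?_
  ext v
  simp only [smul_apply, comp_apply, flip_apply, Complex.ofRealCLM_apply, smul_eq_mul,
    smulRight_apply, Complex.real_smul]
  ring

def twistedTranslate (f : (Fin n → ℂ) → ℂ) (w ζ : Fin n → ℂ) : ℂ :=
  f (ζ - w) * twistPhase n ζ w

def twistedTranslateFDeriv (f : (Fin n → ℂ) → ℂ) (w z : Fin n → ℂ) : (Fin n → ℂ) →L[ℝ] ℂ :=
  twistPhase n z w •
    (fderiv ℝ f (z - w) + ((imDot n).flip w).smulRight (f (z - w) * (Complex.I / 2)))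

theorem hasFDerivAt_twistedTranslate {f : (Fin n → ℂ) → ℂ} {w z : Fin n → ℂ}
    (hf : DifferentiableAt ℝ f (z - w)) :
    HasFDerivAt (twistedTranslate f w) (twistedTranslateFDeriv f w z) z := by
  have hshift : HasFDerivAt (fun ζ => f (ζ - w)) (fderiv ℝ f (z - w)) z :=
    (hasFDerivAt_comp_sub w).2 hf.hasFDerivAt
  refine (hshift.mul (hasFDerivAt_twistPhase_left z w)).congr_fderiv ?_
  ext v
  simp only [twistedTranslateFDeriv, add_apply, smul_apply, smulRight_apply, flip_apply,
    Complex.real_smul, smul_eq_mul, smul_add]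
  ring

theorem twistedTranslateFDeriv_apply (f : (Fin n → ℂ) → ℂ) (w z v : Fin n → ℂ) :
    twistedTranslateFDeriv f w z v =
      twistPhase n z w * (fderiv ℝ f (z - w) v + imDot n v w * (f (z - w) * (Complex.I / 2))) := by
  simp [twistedTranslateFDeriv, mul_add]

theorem twistedTranslateFDeriv_single_one_add (j : Fin n) (f : (Fin n → ℂ) → ℂ)
    (w z : Fin n → ℂ) :
    twistedTranslateFDeriv f w z (Pi.single j 1) +
        Complex.I * ((z j).im : ℂ) / 2 * twistedTranslate f w z =
      twistPhase n z w * Lop n j f (z - w) := by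
  rw [twistedTranslateFDeriv_apply, imDot_single_left, Lop, twistedTranslate]
  simp only [one_mul, Complex.conj_im, Pi.sub_apply, Complex.sub_im, Complex.ofReal_neg,
    Complex.ofReal_sub]
  ring

theorem twistedTranslateFDeriv_single_I_sub (j : Fin n) (f : (Fin n → ℂ) → ℂ)
    (w z : Fin n → ℂ) :
    twistedTranslateFDeriv f w z (Pi.single j Complex.I) -
        Complex.I * ((z j).re : ℂ) / 2 * twistedTranslate f w z =
      twistPhase n z w * Mop n j f (z - w) := by
  rw [twistedTranslateFDeriv_apply, imDot_single_left, Mop, twistedTranslate]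
  simp only [Complex.I_mul_im, Complex.conj_re, Pi.sub_apply, Complex.sub_re, Complex.ofReal_sub]
  ring

theorem Lop_twistedTranslate (j : Fin n) {f : (Fin n → ℂ) → ℂ} {w z : Fin n → ℂ}
    (hf : DifferentiableAt ℝ f (z - w)) :
    Lop n j (twistedTranslate f w) z = twistPhase n z w * Lop n j f (z - w) := by
  rw [Lop, (hasFDerivAt_twistedTranslate hf).fderiv, twistedTranslateFDeriv_single_one_add]

theorem Mop_twistedTranslate (j : Fin n) {f : (Fin n → ℂ) → ℂ} {w z : Fin n → ℂ}
    (hf : DifferentiableAt ℝ f (z - w)) :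
    Mop n j (twistedTranslate f w) z = twistPhase n z w * Mop n j f (z - w) := by
  rw [Mop, (hasFDerivAt_twistedTranslate hf).fderiv, twistedTranslateFDeriv_single_I_sub]


theorem continuous_twistedTranslateFDeriv_left {f : (Fin n → ℂ) → ℂ} (hf : ContDiff ℝ 1 f)
    (z : Fin n → ℂ) : Continuous (fun w => twistedTranslateFDeriv f w z) := by
  have hderiv := hf.continuous_fderiv one_ne_zero
  have hphase := continuous_twistPhase_right z
  unfold twistedTranslateFDeriv
  fun_prop

theorem norm_twistedTranslateFDeriv_le (f : (Fin n → ℂ) → ℂ) (w z : Fin n → ℂ) :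
    ‖twistedTranslateFDeriv f w z‖ ≤
      (1 + ‖imDot n‖ * ‖w‖) * (‖f (z - w)‖ + ‖fderiv ℝ f (z - w)‖) := by
  have hflip : ‖(imDot n).flip w‖ ≤ ‖imDot n‖ * ‖w‖ := by
    simpa only [opNorm_flip] using (imDot n).flip.le_opNorm w
  have hI : ‖f (z - w) * (Complex.I / 2)‖ ≤ ‖f (z - w)‖ := by
    rw [norm_mul, Complex.norm_div, Complex.norm_I, Complex.norm_ofNat]
    linarith [norm_nonneg (f (z - w))]
  rw [twistedTranslateFDeriv, norm_smul, norm_twistPhase, one_mul]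
  refine (norm_add_le _ _).trans ?_
  rw [norm_smulRight_apply]
  have := mul_le_mul hflip hI (norm_nonneg _) (by positivity)
  nlinarith [norm_nonneg (f (z - w)), mul_nonneg (mul_nonneg (norm_nonneg (imDot n))
    (norm_nonneg w)) (norm_nonneg (fderiv ℝ f (z - w)))]

theorem norm_twistedTranslateFDeriv_le_of_decay {f : (Fin n → ℂ) → ℂ} {k : ℕ} {C : ℝ}
    (hC : ∀ x, (1 + ‖x‖) ^ (k + 1) * (‖f x‖ + ‖fderiv ℝ f x‖) ≤ C) {z₀ z : Fin n → ℂ}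
    (hz : ‖z - z₀‖ < 1) (w : Fin n → ℂ) :
    ‖twistedTranslateFDeriv f w z‖ ≤
      (1 + ‖imDot n‖ * (‖z₀‖ + 1)) * C * 2 ^ k * ((1 + ‖w - z₀‖) ^ k)⁻¹ := by
  set A := 1 + ‖z - w‖
  set S := ‖f (z - w)‖ + ‖fderiv ℝ f (z - w)‖
  set K := 1 + ‖imDot n‖ * (‖z₀‖ + 1)
  have hA : 1 ≤ A := le_add_of_nonneg_right (norm_nonneg _)
  have hC₀ : 0 ≤ C := (by positivity : 0 ≤ (1 + ‖z - w‖) ^ (k + 1) * S).trans (hC _)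
  have hweight : 1 + ‖imDot n‖ * ‖w‖ ≤ K * A := by
    have hw : ‖w‖ ≤ (‖z₀‖ + 1) * A := by
      have h₁ := norm_le_norm_add_norm_sub z w
      have h₂ := norm_le_norm_add_norm_sub' z z₀
      nlinarith [mul_nonneg (norm_nonneg z₀) (norm_nonneg (z - w))]
    nlinarith [norm_nonneg (imDot n), norm_nonneg z₀]
  have hdecay : A * S ≤ C * (A ^ k)⁻¹ := by
    rw [le_mul_inv_iff₀ (by positivity), mul_right_comm, ← pow_succ']
    exact hC _
  calc ‖twistedTranslateFDeriv f w z‖ ≤ (1 + ‖imDot n‖ * ‖w‖) * S :=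
        norm_twistedTranslateFDeriv_le f w z
    _ ≤ K * (A * S) := by rw [← mul_assoc]; gcongr
    _ ≤ K * (C * (A ^ k)⁻¹) := by gcongr
    _ ≤ K * (C * (2 ^ k * ((1 + ‖w - z₀‖) ^ k)⁻¹)) := by
        gcongr; exact inv_one_add_norm_sub_pow_le hz w k
    _ = K * C * 2 ^ k * ((1 + ‖w - z₀‖) ^ k)⁻¹ := by ring

end TwistedTranslate

section TwistedConv

variable {n : ℕ}

theorem twistedConv_eq_integral (f g : (Fin n → ℂ) → ℂ) (z : Fin n → ℂ) :
    twistedConv n f g z = ∫ w, g w • twistedTranslate f w z := by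
  simp only [twistedConv, twistedTranslate, smul_eq_mul]
  congr 1 with w
  ring

theorem continuous_twistedTranslate_left {f : (Fin n → ℂ) → ℂ} (hf : Continuous f)
    (z : Fin n → ℂ) : Continuous (fun w => twistedTranslate f w z) :=
  (hf.comp (continuous_const.sub continuous_id)).mul (continuous_twistPhase_right z)

variable {g : (Fin n → ℂ) → ℂ} (hg : AEStronglyMeasurable g) (hgb : ∃ M, ∀ w, ‖g w‖ ≤ M)
include hgb

theorem exists_integrable_bound_twistedTranslateFDeriv (f : 𝓢(Fin n → ℂ, ℂ)) (z₀ : Fin n → ℂ) :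
    ∃ bound : (Fin n → ℂ) → ℝ, Integrable bound ∧
      ∀ w, ∀ z ∈ Metric.ball z₀ 1, ‖g w • twistedTranslateFDeriv f w z‖ ≤ bound w := by
  obtain ⟨M, hM⟩ := hgb
  -- one power of `1 + ‖·‖` more than integrability in real dimension `2n` needs, to absorb the
  -- growth in `w` of the derivative of the phase
  obtain ⟨C, hC⟩ := f.exists_one_add_norm_pow_mul_le (2 * n + 2)
  have hdim : Module.finrank ℝ (Fin n → ℂ) < 2 * n + 1 := by
    simp [Module.finrank_pi_fintype, Complex.finrank_real_complex, mul_comm]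
  refine ⟨fun w => M * ((1 + ‖imDot n‖ * (‖z₀‖ + 1)) * C * 2 ^ (2 * n + 1) *
    ((1 + ‖w - z₀‖) ^ (2 * n + 1))⁻¹), ?_, fun w z hz => ?_⟩
  · exact ((integrable_inv_one_add_norm_sub_pow volume hdim z₀).const_mul _).const_mul _
  · rw [norm_smul]
    exact mul_le_mul (hM w)
      (norm_twistedTranslateFDeriv_le_of_decay hC (mem_ball_iff_norm.1 hz) w)
      (norm_nonneg _) ((norm_nonneg _).trans (hM w))

include hg

theorem integrable_smul_twistedTranslate (f : 𝓢(Fin n → ℂ, ℂ)) (z : Fin n → ℂ) :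
    Integrable (fun w => g w • twistedTranslate f w z) := by
  obtain ⟨M, hM⟩ := hgb
  refine ((f.integrable.norm.comp_sub_left z).const_mul M).mono'
    (hg.smul (continuous_twistedTranslate_left f.continuous z).aestronglyMeasurable)
    (.of_forall fun w => ?_)
  rw [norm_smul, twistedTranslate, norm_mul, norm_twistPhase, mul_one]
  exact mul_le_mul_of_nonneg_right (hM w) (norm_nonneg _)

theorem integrable_smul_twistedTranslateFDeriv (f : 𝓢(Fin n → ℂ, ℂ)) (z : Fin n → ℂ) :
    Integrable (fun w => g w • twistedTranslateFDeriv f w z) := by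
  obtain ⟨bound, hint, hbound⟩ := exists_integrable_bound_twistedTranslateFDeriv hgb f z
  exact hint.mono'
    (hg.smul (continuous_twistedTranslateFDeriv_left (f.smooth 1) z).aestronglyMeasurable)
    (.of_forall fun w => hbound w z (Metric.mem_ball_self one_pos))

theorem hasFDerivAt_twistedConv (f : 𝓢(Fin n → ℂ, ℂ)) (z₀ : Fin n → ℂ) :
    HasFDerivAt (twistedConv n f g) (∫ w, g w • twistedTranslateFDeriv f w z₀) z₀ := by
  obtain ⟨bound, hint, hbound⟩ := exists_integrable_bound_twistedTranslateFDeriv hgb f z₀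
  rw [funext (twistedConv_eq_integral f g)]
  exact hasFDerivAt_integral_of_dominated_of_fderiv_le (Metric.ball_mem_nhds z₀ one_pos)
    (.of_forall fun z => (integrable_smul_twistedTranslate hg hgb f z).aestronglyMeasurable)
    (integrable_smul_twistedTranslate hg hgb f z₀)
    (integrable_smul_twistedTranslateFDeriv hg hgb f z₀).aestronglyMeasurable
    (.of_forall hbound) hint
    (.of_forall fun w z _ => (hasFDerivAt_twistedTranslate f.differentiableAt).const_smul (g w))

theorem fderiv_twistedConv_apply (f : 𝓢(Fin n → ℂ, ℂ)) (z v : Fin n → ℂ) :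
    fderiv ℝ (twistedConv n f g) z v = ∫ w, g w * twistedTranslateFDeriv f w z v := by
  rw [(hasFDerivAt_twistedConv hg hgb f z).fderiv,
    integral_apply (integrable_smul_twistedTranslateFDeriv hg hgb f z)]
  rfl

theorem Lop_twistedConv (j : Fin n) (f : 𝓢(Fin n → ℂ, ℂ)) (z : Fin n → ℂ) :
    Lop n j (twistedConv n f g) z = twistedConv n (Lop n j f) g z := by
  have hD : Integrable (fun w => g w * twistedTranslateFDeriv f w z (Pi.single j 1)) :=
    (integrable_smul_twistedTranslateFDeriv hg hgb f z).apply_continuousLinearMap _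
  rw [Lop, fderiv_twistedConv_apply hg hgb, twistedConv_eq_integral, ← integral_const_mul,
    ← integral_add hD ((integrable_smul_twistedTranslate hg hgb f z).const_mul _),
    twistedConv_eq_integral]
  congr 1 with w
  have h := twistedTranslateFDeriv_single_one_add j f w z
  simp only [smul_eq_mul, twistedTranslate] at h ⊢
  linear_combination g w * h

theorem Mop_twistedConv (j : Fin n) (f : 𝓢(Fin n → ℂ, ℂ)) (z : Fin n → ℂ) :
    Mop n j (twistedConv n f g) z = twistedConv n (Mop n j f) g z := by
  have hD : Integrable (fun w => g w * twistedTranslateFDeriv f w z (Pi.single j Complex.I)) :=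
    (integrable_smul_twistedTranslateFDeriv hg hgb f z).apply_continuousLinearMap _
  rw [Mop, fderiv_twistedConv_apply hg hgb, twistedConv_eq_integral, ← integral_const_mul,
    ← integral_sub hD ((integrable_smul_twistedTranslate hg hgb f z).const_mul _),
    twistedConv_eq_integral]
  congr 1 with w
  have h := twistedTranslateFDeriv_single_I_sub j f w z
  simp only [smul_eq_mul, twistedTranslate] at h ⊢
  linear_combination g w * h

end TwistedConv

/-- The commutation identity
`(∂_{x_j} + i y_j/2)[f(z−w) e^{(i/2)Im(z·w̄)}] = e^{(i/2)Im(z·w̄)} (L_j f)(z−w)` (and the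
analogue for `M_j`), and consequently `L_j (f × g) = (L_j f) × g`,
`M_j (f × g) = (M_j f) × g` for Schwartz `f` and bounded measurable `g`. -/
theorem stmt9 (n : ℕ) (j : Fin n) (w : Fin n → ℂ) :
    (∀ f : (Fin n → ℂ) → ℂ, Differentiable ℝ f → ∀ z : Fin n → ℂ,
      Lop n j (fun ζ => f (ζ - w) * twistPhase n ζ w) z =
          twistPhase n z w * Lop n j f (z - w) ∧
      Mop n j (fun ζ => f (ζ - w) * twistPhase n ζ w) z =
          twistPhase n z w * Mop n j f (z - w)) ∧
    (∀ f : SchwartzMap (Fin n → ℂ) ℂ, ∀ g : (Fin n → ℂ) → ℂ, Measurable g →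
      (∃ C : ℝ, ∀ z, ‖g z‖ ≤ C) →
      (∀ z, Lop n j (twistedConv n (⇑f) g) z = twistedConv n (Lop n j (⇑f)) g z) ∧
      (∀ z, Mop n j (twistedConv n (⇑f) g) z = twistedConv n (Mop n j (⇑f)) g z)) :=
  ⟨fun _ hf z => ⟨Lop_twistedTranslate j (hf (z - w)), Mop_twistedTranslate j (hf (z - w))⟩,
    fun f _ hg hgb => ⟨Lop_twistedConv hg.aestronglyMeasurable hgb j f,
      Mop_twistedConv hg.aestronglyMeasurable hgb j f⟩⟩
end
end
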